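/- arXiv:2108.08838 — 2 statements merged into one kernel-verified Lean document; each statement's English description precedes it below -/
import Mathlib

section
/- The translation T from ALC to GRA₂(¬₁, ∩₁) is semantics-preserving: for every ALC concept C and interpretation I, the relation defined by T(C) in the algebra over I equals C^I. -/
/-! ALC and the general relation algebra GRA₂(¬₁, ∩₁). The vocabulary has unary relation
symbols `U` (atomic concepts, plus built-in `⊤` and `⊥`) and binary relation symbols `B`
(atomic roles). -/

/-- ALC concepts. -/
inductive ALC (U B : Type) : Type
  | top : ALC U B
  | bot : ALC U B
  | atom (A : U) : ALC U B
  | neg (C : ALC U B) : ALC U B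
  | inter (C D : ALC U B) : ALC U B
  | ex (R : B) (C : ALC U B) : ALC U B

/-- Terms of GRA₂(¬₁, ∩₁): atoms of arity at most 2 (including the built-in unary `⊤`
and `⊥`), closed under unary negation `¬₁` and unary intersection `∩₁`. -/
inductive Tm (U B : Type) : Type
  | top : Tm U B
  | bot : Tm U B
  | uatom (A : U) : Tm U B
  | batom (R : B) : Tm U B
  | neg1 (t : Tm U B) : Tm U B
  | cap1 (t₁ t₂ : Tm U B) : Tm U B

/-- An interpretation. -/
structure Interp (U B : Type) : Type 1 where
  Dom : Type
  cInt : U → Set Dom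
  rInt : B → Set (Dom × Dom)

/-- ALC semantics. -/
def asem {U B : Type} (I : Interp U B) : ALC U B → Set I.Dom
  | .top => Set.univ
  | .bot => ∅
  | .atom A => I.cInt A
  | .neg C => (asem I C)ᶜ
  | .inter C D => asem I C ∩ asem I D
  | .ex R C => { u | ∃ v, (u, v) ∈ I.rInt R ∧ v ∈ asem I C }

/-- A relation of arity 1 (`inl`) or arity 2 (`inr`) over the domain of `I`. -/
abbrev Val {U B : Type} (I : Interp U B) : Type := Set I.Dom ⊕ Set (I.Dom × I.Dom)

/-- Semantics of GRA₂(¬₁, ∩₁) terms. `¬₁` is complement on arity ≤ 1 and the empty unary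
relation otherwise; `∩₁` is intersection on unary arguments, the empty unary relation on
two binary arguments, and otherwise the one-dimensional projection `∃₁` of the suffix
intersection `∩̇` of a unary and a binary relation. -/
def tsem {U B : Type} (I : Interp U B) : Tm U B → Val I
  | .top => .inl Set.univ
  | .bot => .inl ∅
  | .uatom A => .inl (I.cInt A)
  | .batom R => .inr (I.rInt R)
  | .neg1 t =>
      match tsem I t with
      | .inl s => .inl sᶜ
      | .inr _ => .inl ∅
  | .cap1 t₁ t₂ =>
      match tsem I t₁, tsem I t₂ with
      | .inl s₁, .inl s₂ => .inl (s₁ ∩ s₂)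
      | .inr _, .inr _ => .inl ∅
      | .inl s, .inr r => .inl { a | ∃ b, (a, b) ∈ r ∧ b ∈ s }
      | .inr r, .inl s => .inl { a | ∃ b, (a, b) ∈ r ∧ b ∈ s }

/-- The translation `T` from ALC into GRA₂(¬₁, ∩₁). -/
def T {U B : Type} : ALC U B → Tm U B
  | .top => .top
  | .bot => .bot
  | .atom A => .uatom A
  | .neg C => .neg1 (T C)
  | .inter C D => .cap1 (T C) (T D)
  | .ex R C => .cap1 (.batom R) (T C)

/-- The translation `T` is semantics-preserving: for every ALC concept `C` and
interpretation `I`, the relation defined by `T C` in the algebra over `I` is the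
(unary) relation `C^I`. -/
theorem T_semantics_preserving {U B : Type} (I : Interp U B) (C : ALC U B) :
    tsem I (T C) = .inl (asem I C) := by
  induction C with
  | top => rfl
  | bot => rfl
  | atom A => rfl
  | neg C ih => simp [T, tsem, asem, ih]
  | inter C D ihC ihD => simp [T, tsem, asem, ihC, ihD]
  | ex R C ih => simp [T, tsem, asem, ih]
end

section
/- The inverse translation S from GRA₂(¬₁, ∩₁) terms to ALC concepts/roles is semantics-preserving: for every term t of GRA₂(¬₁, ∩₁) and interpretation I, the interpretation of S(t) in ALC equals t^I. -/
/-- The inverse translation `S` from GRA₂(¬₁, ∩₁) terms to ALC concepts (`inl`) and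
roles (`inr`): atoms map to themselves; `S(¬₁t) = ¬S(t)` if `t` is unary and `⊥`
otherwise; `S(t₁ ∩₁ t₂)` is `S(t₁) ⊓ S(t₂)` if both are unary, `⊥` if both are binary,
and `∃R.S(t)` if one is a binary term `R` and the other a unary term `t`. -/
def S {U B : Type} : Tm U B → ALC U B ⊕ B
  | .top => .inl .top
  | .bot => .inl .bot
  | .uatom A => .inl (.atom A)
  | .batom R => .inr R
  | .neg1 t =>
      match S t with
      | .inl c => .inl (.neg c)
      | .inr _ => .inl .bot
  | .cap1 t₁ t₂ =>
      match S t₁, S t₂ with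
      | .inl c₁, .inl c₂ => .inl (.inter c₁ c₂)
      | .inr _, .inr _ => .inl .bot
      | .inr R, .inl c => .inl (.ex R c)
      | .inl c, .inr R => .inl (.ex R c)

/-- Interpretation of the output of `S` in ALC: a concept yields a unary relation,
an (atomic) role yields a binary relation. -/
def alcVal {U B : Type} (I : Interp U B) : ALC U B ⊕ B → Val I
  | .inl c => .inl (asem I c)
  | .inr R => .inr (I.rInt R)

/-- The inverse translation `S` is semantics-preserving: for every term `t` of
GRA₂(¬₁, ∩₁) and interpretation `I`, the interpretation of `S t` in ALC equals `t^I`. -/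
theorem S_semantics_preserving {U B : Type} (I : Interp U B) (t : Tm U B) :
    alcVal I (S t) = tsem I t := by
  induction t with
  | top => rfl
  | bot => rfl
  | uatom A => rfl
  | batom R => rfl
  | neg1 t ih =>
    simp only [S, tsem]
    cases h : S t <;> cases h' : tsem I t <;>
      rw [h, h'] at ih <;> simp_all [alcVal, asem]
  | cap1 t₁ t₂ ih₁ ih₂ =>
    simp only [S, tsem]
    cases h₁ : S t₁ <;> cases h₂ : S t₂ <;> cases h₁' : tsem I t₁ <;> cases h₂' : tsem I t₂ <;>
      rw [h₁, h₁'] at ih₁ <;> rw [h₂, h₂'] at ih₂ <;> simp_all [alcVal, asem]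
end
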